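/- Let unit vectors u_1, …, u_n and v_1, …, v_n in ℂ^d form a bipartite unextendible product basis on ℂ^d ⊗ ℂ^d. Then n ≥ 2d − 1. -/

import Mathlib

/-!
If the indices split into parts `s` and `t` with `|s| < d` and `|t| < d`, there is a nonzero `x`
orthogonal to the `u i` with `i ∈ s` and a nonzero `y` orthogonal to the `v i` with `i ∈ t`, so
`x ⊗ y` is orthogonal to every `u i ⊗ v i`. Such a split exists as soon as `n ≤ 2d - 2`.
-/

open Module

variable {𝕜 : Type*} [RCLike 𝕜]
  {E : Type*} [NormedAddCommGroup E] [InnerProductSpace 𝕜 E] [FiniteDimensional 𝕜 E]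
  {F : Type*} [NormedAddCommGroup F] [InnerProductSpace 𝕜 F] [FiniteDimensional 𝕜 F]
  {ι : Type*}

theorem exists_ne_zero_forall_inner_eq_zero_of_card_lt_finrank
    (w : ι → E) (s : Finset ι) (hs : s.card < finrank 𝕜 E) :
    ∃ x : E, x ≠ 0 ∧ ∀ i ∈ s, inner 𝕜 (w i) x = 0 := by
  set K := Submodule.span 𝕜 (Set.range fun i : s => w i)
  have hK : K ≠ ⊤ := by
    intro hK
    have : finrank 𝕜 K ≤ s.card :=
      (finrank_range_le_card (R := 𝕜) fun i : s => w i).trans_eq (Fintype.card_coe s)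
    rw [hK, finrank_top] at this
    omega
  obtain ⟨x, hxK, hx0⟩ := Submodule.exists_mem_ne_zero_of_ne_bot
    (mt Submodule.orthogonal_eq_bot_iff.mp hK)
  exact ⟨x, hx0, fun i hi => (Submodule.mem_orthogonal K x).mp hxK _
    (Submodule.subset_span ⟨⟨i, hi⟩, rfl⟩)⟩

variable (𝕜) in
def IsUnextendible (u : ι → E) (v : ι → F) : Prop :=
  ∀ x y, x ≠ 0 → y ≠ 0 → ∃ i, inner 𝕜 (u i) x * inner 𝕜 (v i) y ≠ 0

namespace IsUnextendible

variable {u : ι → E} {v : ι → F}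

theorem finrank_le_card_or_finrank_le_card (h : IsUnextendible 𝕜 u v) (s t : Finset ι)
    (hst : ∀ i, i ∈ s ∨ i ∈ t) : finrank 𝕜 E ≤ s.card ∨ finrank 𝕜 F ≤ t.card := by
  by_contra! hlt
  obtain ⟨x, hx0, hx⟩ := exists_ne_zero_forall_inner_eq_zero_of_card_lt_finrank u s hlt.1
  obtain ⟨y, hy0, hy⟩ := exists_ne_zero_forall_inner_eq_zero_of_card_lt_finrank v t hlt.2
  obtain ⟨i, hi⟩ := h x y hx0 hy0
  rcases hst i with hs | ht
  · exact hi (by rw [hx i hs, zero_mul])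
  · exact hi (by rw [hy i ht, mul_zero])

theorem finrank_add_finrank_le_card_add_one [Fintype ι] [Nontrivial E] [Nontrivial F]
    (h : IsUnextendible 𝕜 u v) : finrank 𝕜 E + finrank 𝕜 F ≤ Fintype.card ι + 1 := by
  classical
  obtain ⟨s, -, hs⟩ := Finset.exists_subset_card_eq
    (min_le_right (finrank 𝕜 E - 1) (Finset.univ : Finset ι).card)
  have hE : 0 < finrank 𝕜 E := finrank_pos
  have hF : 0 < finrank 𝕜 F := finrank_pos
  have hsc := Finset.card_compl s
  rw [Finset.card_univ] at hs
  have := h.finrank_le_card_or_finrank_le_card s sᶜ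
    fun i => (em (i ∈ s)).imp_right Finset.mem_compl.mpr
  omega

end IsUnextendible

theorem stmt14_general {d n : ℕ} (u v : Fin n → EuclideanSpace ℂ (Fin d))
    (hupb : ∀ x y : EuclideanSpace ℂ (Fin d), x ≠ 0 → y ≠ 0 →
      ∃ i, (inner ℂ (u i) x : ℂ) * (inner ℂ (v i) y : ℂ) ≠ 0) :
    2 * d - 1 ≤ n := by
  rcases Nat.eq_zero_or_pos d with rfl | hd
  · omega
  have : Nontrivial (EuclideanSpace ℂ (Fin d)) :=
    Module.nontrivial_of_finrank_pos (R := ℂ) (by rwa [finrank_euclideanSpace_fin])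
  have hupb' : IsUnextendible ℂ u v := hupb
  have := hupb'.finrank_add_finrank_le_card_add_one
  rw [finrank_euclideanSpace_fin, Fintype.card_fin] at this
  omega

/-- A bipartite unextendible product basis on `ℂ^d ⊗ ℂ^d` of size `n`
satisfies `n ≥ 2d − 1`. -/
theorem stmt14 {d n : ℕ} (u v : Fin n → EuclideanSpace ℂ (Fin d))
    (hu : ∀ i, ‖u i‖ = 1) (hv : ∀ i, ‖v i‖ = 1)
    (horth : ∀ i j, i ≠ j → (inner ℂ (u i) (u j) : ℂ) * (inner ℂ (v i) (v j) : ℂ) = 0)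
    (hupb : ∀ x y : EuclideanSpace ℂ (Fin d), x ≠ 0 → y ≠ 0 →
      ∃ i, (inner ℂ (u i) x : ℂ) * (inner ℂ (v i) y : ℂ) ≠ 0) :
    2 * d - 1 ≤ n :=
  stmt14_general u v hupb
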